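/- arXiv:1612.05410 — 5 statements merged into one kernel-verified Lean document; each statement's English description precedes it below -/
import Mathlib

section
/- Let X be a completely regular Hausdorff space and F a closed subset of X. Then the disjoint complement of J_F(X) in C_b(X) equals J_{cl(X\F)}(X), i.e., {g ∈ C_b(X) : |g| ∧ |f| = 0 for all f ∈ J_F(X)} = {g ∈ C_b(X) : g vanishes on the closure of X \ F}. -/
open scoped BoundedContinuousFunction

/-- the disjoint complement of J_F(X) in C_b(X) equals J_{cl(X\F)}(X). -/
theorem stmt3 {X : Type*} [TopologicalSpace X] [CompletelyRegularSpace X] [T2Space X]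
    (F : Set X) (hF : IsClosed F) :
    {g : X →ᵇ ℝ | ∀ f : X →ᵇ ℝ, (∀ x ∈ F, f x = 0) → |g| ⊓ |f| = 0} =
      {g : X →ᵇ ℝ | ∀ x ∈ closure Fᶜ, g x = 0} := by
  ext g
  simp only [Set.mem_setOf_eq]
  constructor
  · intro hg
    -- first show g vanishes on Fᶜ
    have key : ∀ x ∈ Fᶜ, g x = 0 := by
      intro x hx
      obtain ⟨f, cf, hfx, hfF⟩ :=
        CompletelyRegularSpace.completely_regular x F hF hx
      set h : X →ᵇ ℝ :=
        BoundedContinuousFunction.mkOfBound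
          ⟨fun y => 1 - (f y : ℝ), by
            exact continuous_const.sub (continuous_subtype_val.comp cf)⟩ 2
          (by
            intro a b
            have ha := (f a).2
            have hb := (f b).2
            simp only [Set.mem_Icc] at ha hb
            rw [Real.dist_eq]
            simp only [ContinuousMap.coe_mk]
            have : |1 - (f a : ℝ) - (1 - (f b : ℝ))| ≤ 2 := by
              rw [abs_le]; constructor <;> nlinarith [ha.1, ha.2, hb.1, hb.2]
            simpa using this) with hh
      have hhF : ∀ y ∈ F, h y = 0 := by
        intro y hy
        have hfy : (f y : ℝ) = 1 := by
          have := hfF hy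
          rw [this]
          rfl
        show 1 - (f y : ℝ) = 0
        rw [hfy]; ring
      have h0 := hg h hhF
      have := congrArg (fun k : X →ᵇ ℝ => k x) h0
      simp only [BoundedContinuousFunction.coe_zero, Pi.zero_apply] at this
      have hx1 : h x = 1 := by
        simp [hh, hfx]
      rw [show ((|g| ⊓ |h|) x : ℝ) = |g x| ⊓ |h x| from rfl] at this
      rw [hx1] at this
      have h1 : min |g x| 1 = 0 := by simpa using this
      rcases min_cases |g x| (1:ℝ) with ⟨he, _⟩ | ⟨he, _⟩
      · exact abs_eq_zero.mp (he ▸ h1)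
      · rw [he] at h1; norm_num at h1
    intro x hx
    have hclosed : IsClosed {y : X | g y = 0} :=
      isClosed_eq g.continuous continuous_const
    have : closure Fᶜ ⊆ {y : X | g y = 0} :=
      closure_minimal (fun y hy => key y hy) hclosed
    exact this hx
  · intro hg f hf
    ext x
    simp only [BoundedContinuousFunction.coe_inf, Pi.inf_apply,
      BoundedContinuousFunction.coe_abs, Pi.abs_apply,
      BoundedContinuousFunction.coe_zero, Pi.zero_apply]
    by_cases hx : x ∈ closure Fᶜ
    · rw [hg x hx]; simp [abs_nonneg]
    · have : x ∈ F := by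
        by_contra h
        exact hx (subset_closure h)
      rw [hf x this]; simp [abs_nonneg]
end

section
/- Let X be a completely regular Hausdorff space and A ⊆ X an open subset. If a net (f_α) in C(X) increases to f (i.e., f_α ↗ f, meaning f is the supremum of the increasing net in C(X)), then the restrictions satisfy f_α|_A ↗ f|_A in C(A). -/
/-!
If `g` is an upper bound of the restrictions on `A` but `g a < f a` for some `a ∈ A`, then
`f` exceeds `g` by at least `δ > 0` on an open neighbourhood `U ⊆ A` of `a`. Complete
regularity gives a bump `χ` with `χ a = 1` vanishing off `U`; then `f - δ • χ` is still an
upper bound of the family on all of `X` (on `U` it lies above `g`, off `U` it equals `f`) but is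
smaller than `f` at `a`, contradicting the minimality of `f`.
-/

universe u

open Set

theorem CompletelyRegularSpace.exists_continuousMap_eq_one_eqOn_zero_compl
    {X : Type*} [TopologicalSpace X] [CompletelyRegularSpace X]
    {U : Set X} (hU : IsOpen U) {x : X} (hx : x ∈ U) :
    ∃ χ : C(X, ℝ), χ x = 1 ∧ (∀ y, χ y ≤ 1) ∧ EqOn χ 0 Uᶜ := by
  obtain ⟨φ, hφ, hφx, hφU⟩ := completely_regular_isOpen x U hU hx
  refine ⟨⟨fun y => 1 - φ y, by fun_prop⟩, by simp [hφx], fun y => ?_, fun y hy => ?_⟩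
  · simpa using (φ y).2.1
  · simp [hφU hy]

theorem ContinuousMap.isLUB_image_restrict_of_isOpen
    {X : Type*} [TopologicalSpace X] [CompletelyRegularSpace X]
    {A : Set X} (hA : IsOpen A) {S : Set C(X, ℝ)} {f : C(X, ℝ)} (hf : IsLUB S f) :
    IsLUB ((fun h : C(X, ℝ) => h.restrict A) '' S) (f.restrict A) := by
  refine ⟨?_, fun g hg a => ?_⟩
  · rintro _ ⟨h, hS, rfl⟩ a
    exact hf.1 hS a
  by_contra! hlt
  have hga : g a < f a := hlt
  set δ : ℝ := (f a - g a) / 2 with hδ_def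
  have hδ : 0 < δ := by linarith
  set U : Set X := Subtype.val '' {b : A | g b < f b - δ}
  have hU : IsOpen U :=
    hA.isOpenMap_subtype_val _ (isOpen_lt g.continuous (by fun_prop))
  have haU : (a : X) ∈ U := ⟨a, show g a < f a - δ by linarith, rfl⟩
  obtain ⟨χ, hχa, hχ1, hχU⟩ :=
    CompletelyRegularSpace.exists_continuousMap_eq_one_eqOn_zero_compl hU haU
  have hbound : f - δ • χ ∈ upperBounds S := by
    intro h hS y
    show h y ≤ f y - δ * χ y
    by_cases hy : y ∈ U
    · obtain ⟨b, hb, rfl⟩ := hy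
      have hgb : h b ≤ g b := hg ⟨h, hS, rfl⟩ b
      have hb' : g b < f b - δ := hb
      have hδχ : δ * χ b ≤ δ := mul_le_of_le_one_right hδ.le (hχ1 b)
      linarith
    · simpa [hχU hy] using hf.1 hS y
  have hfa : f a ≤ f a - δ * χ a := hf.2 hbound a
  rw [hχa] at hfa
  linarith

theorem stmt4_general {X : Type u} [TopologicalSpace X] [CompletelyRegularSpace X]
    (A : Set X) (hA : IsOpen A)
    {ι : Type u}
    (f_ : ι → C(X, ℝ)) (f : C(X, ℝ))
    (hsup : IsLUB (Set.range f_) f) :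
    IsLUB (Set.range fun i => (f_ i).restrict A) (f.restrict A) := by
  rw [range_comp' (fun h : C(X, ℝ) => h.restrict A) f_]
  exact ContinuousMap.isLUB_image_restrict_of_isOpen hA hsup

/-- if a net increases to its supremum f in C(X) then the restrictions
to an open set A increase to the restriction of f in C(A). -/
theorem stmt4 {X : Type u} [TopologicalSpace X] [CompletelyRegularSpace X] [T2Space X]
    (A : Set X) (hA : IsOpen A)
    {ι : Type u} [Preorder ι] [IsDirected ι (· ≤ ·)]
    (f_ : ι → C(X, ℝ)) (hmono : Monotone f_) (f : C(X, ℝ))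
    (hsup : IsLUB (Set.range f_) f) :
    IsLUB (Set.range fun i => (f_ i).restrict A) (f.restrict A) :=
  stmt4_general A hA f_ f hsup
end

section
/- Let X be a completely regular Hausdorff space and A ⊆ X a closed set. The following are equivalent: (a) A equals the closure of its interior; (b) whenever f_α ↗ f in C(X), then f_α|_A ↗ f|_A in C(A). -/
/-!
Suprema in `C(X, ℝ)` need not be pointwise, but they are approached on every nonempty open set:
if all members of `S` stayed `ε` below `f` on an open `U ∋ x`, then `f` minus `ε` times a bump
peaking at `x` and vanishing off `U` would be a smaller upper bound. Hence restriction to an open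
set preserves suprema, and by continuity so does restriction to any `A ⊆ closure (interior A)`.

Conversely, if `a ∈ A \ closure (interior A)`, let `ψ` peak at `a` and vanish on
`closure (interior A)`, and let `S` be the functions `≤ 1` that are `≤ 1 - ψ` on `A`. This family
is directed with supremum `1`, because every point off the nowhere dense set `frontier A` is the
peak of a member of `S`; yet on `A` it is bounded by `1 - ψ`, which vanishes at `a`.
-/

universe u

open Set

section

variable {X : Type*} [TopologicalSpace X]

theorem CompletelyRegularSpace.exists_continuousMap_eq_one_eqOn_zero [CompletelyRegularSpace X]
    {K : Set X} (hK : IsClosed K) {x : X} (hx : x ∉ K) :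
    ∃ φ : C(X, ℝ), φ x = 1 ∧ EqOn φ 0 K ∧ ∀ y, φ y ∈ Icc 0 1 := by
  obtain ⟨f, hf, hfx, hfK⟩ := CompletelyRegularSpace.completely_regular x K hK hx
  refine ⟨⟨fun y ↦ 1 - (f y : ℝ), by fun_prop⟩, by simp [hfx], fun y hy ↦ by simp [hfK hy],
    fun y ↦ ⟨?_, ?_⟩⟩ <;> simp [(f y).2.1, (f y).2.2]

namespace ContinuousMap

theorem isLUB_of_dense_setOf_le {β : Type*} [PartialOrder β] [TopologicalSpace β]
    [OrderClosedTopology β] {S : Set C(X, β)} {f : C(X, β)} (hf : f ∈ upperBounds S)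
    (hd : Dense {x | ∃ g ∈ S, f x ≤ g x}) : IsLUB S f := by
  refine ⟨hf, fun h hh x ↦ le_on_closure ?_ f.continuous.continuousOn
    h.continuous.continuousOn (hd.closure_eq ▸ mem_univ x)⟩
  rintro y ⟨g, hg, hy⟩
  exact hy.trans (hh hg y)

variable [CompletelyRegularSpace X]

theorem exists_sub_lt_of_isLUB {S : Set C(X, ℝ)} {f : C(X, ℝ)} (hf : IsLUB S f) {U : Set X}
    (hU : IsOpen U) (hne : U.Nonempty) {ε : ℝ} (hε : 0 < ε) :
    ∃ y ∈ U, ∃ g ∈ S, f y - ε < g y := by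
  by_contra! hle
  obtain ⟨x, hx⟩ := hne
  obtain ⟨φ, hφx, hφU, hφ⟩ :=
    CompletelyRegularSpace.exists_continuousMap_eq_one_eqOn_zero hU.isClosed_compl (not_not.2 hx)
  have hub : f - ε • φ ∈ upperBounds S := fun g hg y ↦ by
    by_cases hy : y ∈ U
    · show g y ≤ f y - ε * φ y
      nlinarith [hle y hy g hg, (hφ y).2]
    · simpa [hφU hy] using hf.1 hg y
  have := hf.2 hub x
  simp [hφx] at this
  linarith

theorem isLUB_restrict_of_isOpen {S : Set C(X, ℝ)} {f : C(X, ℝ)} (hf : IsLUB S f) {U : Set X}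
    (hU : IsOpen U) : IsLUB ((fun g ↦ g.restrict U) '' S) (f.restrict U) := by
  refine ⟨fun _ ⟨g, hg, hgU⟩ p ↦ hgU ▸ hf.1 hg p, fun h hh ↦ le_def.2 fun p ↦ ?_⟩
  by_contra! hlt
  change h p < f p at hlt
  set ε := (f p - h p) / 2
  have hV : IsOpen {q : U | h q + ε < f q} := isOpen_lt (by fun_prop) (by fun_prop)
  obtain ⟨_, ⟨q, hq, rfl⟩, g, hg, hgq⟩ :=
    exists_sub_lt_of_isLUB hf (hU.isOpenMap_subtype_val _ hV) ⟨p, p, by simp [ε]; linarith, rfl⟩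
      (by simp [ε]; linarith : 0 < ε)
  have : g q ≤ h q := hh ⟨g, hg, rfl⟩ q
  change h q + ε < f q at hq
  linarith

theorem isLUB_restrict_of_subset_closure_interior {S : Set C(X, ℝ)} {f : C(X, ℝ)}
    (hf : IsLUB S f) {A : Set X} (hA : A ⊆ closure (interior A)) :
    IsLUB ((fun g ↦ g.restrict A) '' S) (f.restrict A) := by
  refine ⟨fun _ ⟨g, hg, hgA⟩ p ↦ hgA ▸ hf.1 hg p, fun h hh ↦ ?_⟩
  let ι : C(interior A, A) := ⟨inclusion interior_subset, continuous_inclusion interior_subset⟩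
  have hint : f.restrict (interior A) ≤ h.comp ι :=
    (isLUB_restrict_of_isOpen hf isOpen_interior).2 fun _ ⟨g, hg, hgA⟩ p ↦
      hgA ▸ hh ⟨g, hg, rfl⟩ (ι p)
  have hdense : Dense (((↑) : A → X) ⁻¹' interior A) := by
    rwa [Subtype.dense_iff, Subtype.image_preimage_coe, inter_eq_right.2 interior_subset]
  intro p
  exact le_on_closure (f := fun q : A ↦ f q) (g := h) (fun q hq ↦ hint ⟨q, hq⟩)
    (by fun_prop) (by fun_prop) (hdense.closure_eq ▸ mem_univ p)

theorem exists_directedOn_isLUB_not_isLUB_restrict {A : Set X} (hA : IsClosed A) {a : X}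
    (ha : a ∈ A) (hna : a ∉ closure (interior A)) :
    ∃ (S : Set C(X, ℝ)) (f : C(X, ℝ)), DirectedOn (· ≤ ·) S ∧ IsLUB S f ∧
      ¬ IsLUB ((fun g ↦ g.restrict A) '' S) (f.restrict A) := by
  obtain ⟨ψ, hψa, hψ0, hψ⟩ :=
    CompletelyRegularSpace.exists_continuousMap_eq_one_eqOn_zero isClosed_closure hna
  let S : Set C(X, ℝ) := {u | u ≤ 1 ∧ ∀ y ∈ A, u y ≤ 1 - ψ y}
  have hS : SupClosed S := fun u hu v hv ↦
    ⟨sup_le hu.1 hv.1, fun y hy ↦ sup_le (hu.2 y hy) (hv.2 y hy)⟩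
  refine ⟨S, 1, hS.directedOn, isLUB_of_dense_setOf_le (fun u hu ↦ hu.1) ?_, fun hlub ↦ ?_⟩
  · refine (interior_eq_empty_iff_dense_compl.1 (interior_frontier hA)).mono fun x hx ↦ ?_
    obtain ⟨φ, hφx, hφ0, hφ⟩ :=
      CompletelyRegularSpace.exists_continuousMap_eq_one_eqOn_zero isClosed_frontier hx
    refine ⟨φ, ⟨fun y ↦ (hφ y).2, fun y hy ↦ ?_⟩, hφx.ge⟩
    by_cases hyi : y ∈ interior A
    · simp [hψ0 (subset_closure hyi), (hφ y).2]
    · have : y ∈ frontier A := hA.frontier_eq ▸ ⟨hy, hyi⟩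
      simp [hφ0 this, (hψ y).2]
  · have hub : (1 - ψ).restrict A ∈ upperBounds ((fun g ↦ g.restrict A) '' S) := by
      rintro _ ⟨u, hu, rfl⟩ p
      exact hu.2 p p.2
    have := hlub.2 hub ⟨a, ha⟩
    norm_num [hψa] at this

end ContinuousMap

end

theorem stmt5_general {X : Type u} [TopologicalSpace X] [CompletelyRegularSpace X]
    (A : Set X) (hA : IsClosed A) :
    A = closure (interior A) ↔
      ∀ (ι : Type u) [Preorder ι] [IsDirected ι (· ≤ ·)] (f_ : ι → C(X, ℝ)) (f : C(X, ℝ)),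
        Monotone f_ → IsLUB (Set.range f_) f →
          IsLUB (Set.range fun i => (f_ i).restrict A) (f.restrict A) := by
  constructor
  · intro h ι _ _ f_ f _ hf
    simpa only [Function.comp_def, ← range_comp] using
      ContinuousMap.isLUB_restrict_of_subset_closure_interior hf h.le
  · intro H
    refine (closure_minimal interior_subset hA).antisymm' fun a ha ↦ by_contra fun hna ↦ ?_
    obtain ⟨S, f, hSdir, hS, hSA⟩ :=
      ContinuousMap.exists_directedOn_isLUB_not_isLUB_restrict hA ha hna
    have := hSdir.isDirectedOrder
    have := H S Subtype.val f (fun _ _ h ↦ h) (by rwa [Subtype.range_coe])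
    exact hSA (by simpa [image_eq_range] using this)

/-- for closed A in a completely regular Hausdorff space,
A = closure (interior A) iff the restriction operator to A preserves suprema of
increasing nets in C(X). -/
theorem stmt5 {X : Type u} [TopologicalSpace X] [CompletelyRegularSpace X] [T2Space X]
    (A : Set X) (hA : IsClosed A) :
    A = closure (interior A) ↔
      ∀ (ι : Type u) [Preorder ι] [IsDirected ι (· ≤ ·)] (f_ : ι → C(X, ℝ)) (f : C(X, ℝ)),
        Monotone f_ → IsLUB (Set.range f_) f →
          IsLUB (Set.range fun i => (f_ i).restrict A) (f.restrict A) :=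
  stmt5_general A hA
end

section
/- Let X be a completely regular Hausdorff space, A ⊆ X any subset, and Φ_A : C_b(X) → C_b(A) the restriction operator f ↦ f|_A. Then the range of Φ_A is order dense in C_b(A): for every nonzero 0 ≤ f ∈ C_b(A) there exists g ∈ C_b(X) with 0 ≤ g|_A ≤ f and g|_A ≠ 0. -/
/-!
Pick `a` with `f a > 0`. The set `{f > f a / 2}` is the trace on `A` of an open `V ⊆ X`, and
complete regularity gives a bump at `a` vanishing off `V`; scaled to height `f a / 2`, it is
dominated by `f` on `A` and nonzero at `a`.
-/

open scoped BoundedContinuousFunction unitInterval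

theorem CompletelyRegularSpace.exists_bcf_bump {X : Type*} [TopologicalSpace X]
    [CompletelyRegularSpace X] {U : Set X} (hU : IsOpen U) {x : X} (hx : x ∈ U) :
    ∃ g : X →ᵇ ℝ, g x = 1 ∧ (∀ y, g y ∈ Set.Icc (0 : ℝ) 1) ∧ ∀ y ∉ U, g y = 0 := by
  obtain ⟨h, hcont, hx0, hU1⟩ := CompletelyRegularSpace.completely_regular_isOpen x U hU hx
  let ι : I →ᵇ ℝ := .mkOfCompact ⟨Subtype.val, continuous_subtype_val⟩
  refine ⟨ι.compContinuous ⟨fun y ↦ σ (h y), by fun_prop⟩, ?_, fun y ↦ (σ (h y)).2, fun y hy ↦ ?_⟩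
  · simp [ι, hx0]
  · simp [ι, hU1 hy]

theorem BoundedContinuousFunction.exists_pos_of_nonneg_of_ne_zero {α : Type*}
    [TopologicalSpace α] {f : α →ᵇ ℝ} (hf : 0 ≤ f) (hne : f ≠ 0) : ∃ a, 0 < f a := by
  by_contra! h
  exact hne (ext fun a ↦ le_antisymm (h a) (hf a))

theorem exists_nonneg_minorant_on_subtype {X : Type*} [TopologicalSpace X]
    [CompletelyRegularSpace X] {A : Set X} {f : A →ᵇ ℝ} (hf : 0 ≤ f) {a : A} (ha : 0 < f a) :
    ∃ g : X →ᵇ ℝ, 0 ≤ g ∧ (∀ y : A, g y ≤ f y) ∧ g a = f a / 2 := by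
  obtain ⟨V, hV, hVf⟩ := isOpen_induced_iff.mp (isOpen_Ioi.preimage f.continuous)
  have haV : (a : X) ∈ V := by
    show a ∈ Subtype.val ⁻¹' V
    rw [hVf]
    exact half_lt_self ha
  obtain ⟨b, hba, hb01, hb0⟩ := CompletelyRegularSpace.exists_bcf_bump hV haV
  refine ⟨(f a / 2) • b, fun y ↦ ?_, fun y ↦ ?_, by simp [hba]⟩
  · simpa using mul_nonneg (half_pos ha).le (hb01 y).1
  · by_cases hy : (y : X) ∈ V
    · have hfy : f a / 2 < f y := by
        change y ∈ Subtype.val ⁻¹' V at hy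
        rwa [hVf] at hy
      calc ((f a / 2) • b) y = f a / 2 * b y := rfl
        _ ≤ f a / 2 := mul_le_of_le_one_right (half_pos ha).le (hb01 y).2
        _ ≤ f y := hfy.le
    · simpa [hb0 _ hy] using hf y

theorem stmt6_general {X : Type*} [TopologicalSpace X] [CompletelyRegularSpace X]
    (A : Set X) :
    ∀ f : A →ᵇ ℝ, 0 ≤ f → f ≠ 0 →
      ∃ g : X →ᵇ ℝ,
        0 ≤ g.compContinuous (⟨Subtype.val, continuous_subtype_val⟩ : C(A, X)) ∧
        g.compContinuous (⟨Subtype.val, continuous_subtype_val⟩ : C(A, X)) ≤ f ∧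
        g.compContinuous (⟨Subtype.val, continuous_subtype_val⟩ : C(A, X)) ≠ 0 := by
  intro f hf hne
  obtain ⟨a, ha⟩ := f.exists_pos_of_nonneg_of_ne_zero hf hne
  obtain ⟨g, hg0, hgf, hga⟩ := exists_nonneg_minorant_on_subtype hf ha
  refine ⟨g, fun y ↦ hg0 y, hgf, fun h ↦ ?_⟩
  have : g a = 0 := DFunLike.congr_fun h a
  linarith

/-- the range of the restriction operator C_b(X) → C_b(A) is order dense. -/
theorem stmt6 {X : Type*} [TopologicalSpace X] [CompletelyRegularSpace X] [T2Space X]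
    (A : Set X) :
    ∀ f : A →ᵇ ℝ, 0 ≤ f → f ≠ 0 →
      ∃ g : X →ᵇ ℝ,
        0 ≤ g.compContinuous (⟨Subtype.val, continuous_subtype_val⟩ : C(A, X)) ∧
        g.compContinuous (⟨Subtype.val, continuous_subtype_val⟩ : C(A, X)) ≤ f ∧
        g.compContinuous (⟨Subtype.val, continuous_subtype_val⟩ : C(A, X)) ≠ 0 :=
  stmt6_general A
end

section
/- Let X be a σ-compact, locally compact, noncompact Hausdorff space. Then the one-point compactification X⁺ is not extremally disconnected. -/
open Set Filter Topology OnePoint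

set_option maxHeartbeats 1000000

/-- for a σ-compact locally compact noncompact Hausdorff space X,
the one-point compactification X⁺ is not extremally disconnected. -/
theorem stmt14 {X : Type*} [TopologicalSpace X] [LocallyCompactSpace X] [T2Space X]
    [SigmaCompactSpace X] (hX : ¬ CompactSpace X) :
    ¬ ExtremallyDisconnected (OnePoint X) := by
  intro hED
  set K := CompactExhaustion.choice X with hK
  -- pick points escaping to infinity
  have hne : ∀ n, ((K n)ᶜ : Set X).Nonempty := by
    intro n
    rw [nonempty_compl]
    intro h
    exact hX ⟨h ▸ K.isCompact n⟩
  choose x hx using hne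
  -- for each n, a later index g n with x n ∈ interior (K (g n)) and n < g n
  have hg : ∀ n, ∃ m, n < m ∧ x n ∈ interior (K m) := by
    intro n
    obtain ⟨m, hm⟩ := K.exists_mem (x n)
    refine ⟨max (m + 1) (n + 1), lt_of_lt_of_le (Nat.lt_succ_self n) (le_max_right _ _), ?_⟩
    exact interior_mono (K.subset (le_max_left _ _)) (K.subset_interior_succ m hm)
  choose g hgl hgm using hg
  -- recursive index sequence
  let N : ℕ → ℕ := fun k => Nat.rec 0 (fun _ nk => g nk) k
  have hN_succ : ∀ k, N (k + 1) = g (N k) := fun k => rfl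
  have hN_lt : ∀ k, N k < N (k + 1) := fun k => hgl (N k)
  have hN_mono : StrictMono N := strictMono_nat_of_lt_succ hN_lt
  have hN_ge : ∀ k, k ≤ N k := fun k => hN_mono.le_apply
  -- the disjoint open "annuli"
  let V : ℕ → Set X := fun k => interior (K (N (k + 1))) \ K (N k)
  have hVopen : ∀ k, IsOpen (V k) := fun k =>
    isOpen_interior.sdiff (K.isCompact _).isClosed
  have hyV : ∀ k, x (N k) ∈ V k := fun k => ⟨hN_succ k ▸ hgm (N k), hx (N k)⟩
  have hVdisj : ∀ {k j}, k < j → Disjoint (V k) (V j) := by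
    intro k j hkj
    refine Set.disjoint_left.2 fun z hzk hzj => hzj.2 ?_
    exact K.subset (hN_mono.monotone hkj) (interior_subset hzk.1)
  -- two disjoint open sets
  let U₀ : Set X := ⋃ k, V (2 * k)
  let U₁ : Set X := ⋃ k, V (2 * k + 1)
  have hU₀ : IsOpen U₀ := isOpen_iUnion fun k => hVopen (2 * k)
  have hU₁ : IsOpen U₁ := isOpen_iUnion fun k => hVopen (2 * k + 1)
  have hdisj : Disjoint U₀ U₁ := by
    simp only [U₀, U₁, disjoint_iUnion_left, disjoint_iUnion_right]
    intro j k
    rcases lt_or_gt_of_ne (by omega : 2 * k ≠ 2 * j + 1) with h | h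
    · exact hVdisj h
    · exact (hVdisj h).symm
  -- their images in OnePoint X
  let f : X → OnePoint X := (↑)
  have hfo : IsOpenMap f := OnePoint.isOpenEmbedding_coe.isOpenMap
  have hfi : Function.Injective f := OnePoint.coe_injective
  have hdisj' : Disjoint (f '' U₀) (f '' U₁) :=
    (Set.disjoint_image_iff hfi).2 hdisj
  -- a tendsto-to-infinity helper
  have htend : ∀ c : ℕ → ℕ, (∀ k, k ≤ c k) →
      Tendsto (fun k => f (x (c k))) atTop (𝓝 (∞ : OnePoint X)) := by
    intro c hc
    refine OnePoint.tendsto_coe_infty.comp ?_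
    rw [Filter.hasBasis_coclosedCompact.tendsto_right_iff]
    rintro s ⟨-, hsc⟩
    obtain ⟨n, hn⟩ := K.exists_superset_of_isCompact hsc
    filter_upwards [eventually_ge_atTop n] with k hk hmem
    exact hx (c k) (K.subset (hk.trans (hc k)) (hn hmem))
  -- infinity is in the closure of both images
  have hcl₀ : (∞ : OnePoint X) ∈ closure (f '' U₀) := by
    refine mem_closure_of_tendsto (htend (fun k => N (2 * k))
      (fun k => le_trans (by omega) (hN_ge (2 * k)))) ?_
    exact Eventually.of_forall fun k =>
      ⟨x (N (2 * k)), mem_iUnion.2 ⟨k, hyV (2 * k)⟩, rfl⟩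
  have hcl₁ : (∞ : OnePoint X) ∈ closure (f '' U₁) := by
    refine mem_closure_of_tendsto (htend (fun k => N (2 * k + 1))
      (fun k => le_trans (by omega) (hN_ge (2 * k + 1)))) ?_
    exact Eventually.of_forall fun k =>
      ⟨x (N (2 * k + 1)), mem_iUnion.2 ⟨k, hyV (2 * k + 1)⟩, rfl⟩
  -- extremal disconnectedness forces the closures to be disjoint
  have h₀ : IsOpen (closure (f '' U₀)) := hED.open_closure _ (hfo _ hU₀)
  have hd1 : Disjoint (closure (f '' U₀)) (f '' U₁) :=
    hdisj'.closure_left (hfo _ hU₁)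
  have hd2 : Disjoint (closure (f '' U₀)) (closure (f '' U₁)) :=
    (hd1.symm.closure_left h₀).symm
  exact hd2.ne_of_mem hcl₀ hcl₁ rfl
end
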